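/- arXiv:1311.0793 — 7 statements merged into one kernel-verified Lean document; each statement's English description precedes it below -/
import Mathlib

section
/- Let X be a set and θ₁, θ₂ : X → X commuting maps. Then θ₁ and θ₂ *-commute if and only if for all x ∈ X, the restriction of θ₁ maps θ₂⁻¹(x) bijectively onto θ₂⁻¹(θ₁(x)). -/
def StarCommute {X : Type*} (f g : X → X) : Prop :=
  ∀ x₁ x₂ : X, f x₁ = g x₂ → ∃! y : X, g y = x₁ ∧ f y = x₂

theorem stmt_1 {X : Type*} (θ₁ θ₂ : X → X) (hcomm : θ₁ ∘ θ₂ = θ₂ ∘ θ₁) :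
    StarCommute θ₁ θ₂ ↔
      ∀ x : X, Set.BijOn θ₁ (θ₂ ⁻¹' {x}) (θ₂ ⁻¹' {θ₁ x}) := by
  have hc : ∀ y, θ₁ (θ₂ y) = θ₂ (θ₁ y) := fun y => congrFun hcomm y
  constructor
  · intro h x
    refine ⟨?_, ?_, ?_⟩
    · intro z hz
      simp only [Set.mem_preimage, Set.mem_singleton_iff] at *
      rw [← hc, hz]
    · intro y hy y' hy' heq
      simp only [Set.mem_preimage, Set.mem_singleton_iff] at hy hy'
      obtain ⟨w, hw, huniq⟩ := h x (θ₁ y) (by rw [← hc, hy])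
      rw [huniq y ⟨hy, rfl⟩, huniq y' ⟨hy', heq.symm⟩]
    · intro z hz
      simp only [Set.mem_preimage, Set.mem_singleton_iff] at hz
      obtain ⟨w, ⟨hw1, hw2⟩, _⟩ := h x z hz.symm
      exact ⟨w, by simp [hw1], hw2⟩
  · intro h x₁ x₂ heq
    have hx₂ : x₂ ∈ θ₂ ⁻¹' {θ₁ x₁} := by
      simp [Set.mem_preimage, heq]
    obtain ⟨y, hy, hy2⟩ := (h x₁).surjOn hx₂
    simp only [Set.mem_preimage, Set.mem_singleton_iff] at hy
    refine ⟨y, ⟨hy, hy2⟩, ?_⟩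
    intro y' ⟨h1, h2⟩
    exact (h x₁).injOn (by simp [h1]) (by simp [hy]) (by rw [h2, hy2])
end

section
/- Let X be a set and θ₁, θ₂, θ₃ : X → X pairwise commuting maps. Then θ₁ *-commutes with θ₂ ∘ θ₃ if and only if θ₁ *-commutes with θ₂ and θ₁ *-commutes with θ₃. -/
theorem stmt_2 {X : Type*} (θ₁ θ₂ θ₃ : X → X)
    (h12 : θ₁ ∘ θ₂ = θ₂ ∘ θ₁) (h13 : θ₁ ∘ θ₃ = θ₃ ∘ θ₁) (h23 : θ₂ ∘ θ₃ = θ₃ ∘ θ₂) :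
    StarCommute θ₁ (θ₂ ∘ θ₃) ↔ StarCommute θ₁ θ₂ ∧ StarCommute θ₁ θ₃ := by
  have c12 : ∀ x, θ₁ (θ₂ x) = θ₂ (θ₁ x) := fun x => congrFun h12 x
  have c13 : ∀ x, θ₁ (θ₃ x) = θ₃ (θ₁ x) := fun x => congrFun h13 x
  have c23 : ∀ x, θ₂ (θ₃ x) = θ₃ (θ₂ x) := fun x => congrFun h23 x
  constructor
  · intro h
    -- joint injectivity of (θ₂∘θ₃, θ₁)
    have inj : ∀ y y', θ₂ (θ₃ y) = θ₂ (θ₃ y') → θ₁ y = θ₁ y' → y = y' := by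
      intro y y' he1 he2
      obtain ⟨z, _, hu⟩ := h (θ₂ (θ₃ y)) (θ₁ y)
        (by simp only [Function.comp_apply]; rw [c12, c13])
      have h1 : y = z := hu y ⟨rfl, rfl⟩
      have h2 : y' = z := hu y' ⟨he1.symm, he2.symm⟩
      rw [h1, h2]
    constructor
    · -- StarCommute θ₁ θ₂
      intro x₁ x₂ he
      obtain ⟨w, ⟨hw1, hw2⟩, _⟩ := h (θ₃ x₁) x₂
        (by simp only [Function.comp_apply]; rw [c13, he, c23])
      simp only [Function.comp_apply] at hw1
      have hkey : θ₂ w = x₁ :=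
        inj (θ₂ w) x₁ (by rw [← c23 w, hw1]) (by rw [c12, hw2, he])
      refine ⟨w, ⟨hkey, hw2⟩, ?_⟩
      rintro y ⟨hy1, hy2⟩
      exact inj y w (by rw [c23, hy1, ← hw1]) (by rw [hy2, hw2])
    · -- StarCommute θ₁ θ₃
      intro x₁ x₂ he
      obtain ⟨w, ⟨hw1, hw2⟩, _⟩ := h (θ₂ x₁) x₂
        (by simp only [Function.comp_apply]; rw [c12, he])
      simp only [Function.comp_apply] at hw1
      have hkey : θ₃ w = x₁ := by
        refine inj (θ₃ w) x₁ ?_ (by rw [c13, hw2, he])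
        rw [show θ₂ (θ₃ (θ₃ w)) = θ₃ (θ₂ (θ₃ w)) from c23 _, hw1, ← c23]
      refine ⟨w, ⟨hkey, hw2⟩, ?_⟩
      rintro y ⟨hy1, hy2⟩
      exact inj y w (by rw [hy1, ← hw1, hkey]) (by rw [hy2, hw2])
  · rintro ⟨h2, h3⟩ x₁ x₂ he
    simp only [Function.comp_apply] at he
    obtain ⟨z, ⟨hz1, hz2⟩, hzu⟩ := h2 x₁ (θ₃ x₂) he
    obtain ⟨y, ⟨hy1, hy2⟩, hyu⟩ := h3 z x₂ hz2
    refine ⟨y, ⟨by simp only [Function.comp_apply]; rw [hy1, hz1], hy2⟩, ?_⟩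
    rintro y' ⟨hy'1, hy'2⟩
    simp only [Function.comp_apply] at hy'1
    have hz' : θ₃ y' = z := hzu (θ₃ y') ⟨hy'1, by rw [c13, hy'2]⟩
    exact hyu y' ⟨hz', hy'2⟩
end

section
/- Let K be a group and θ₁, θ₂ commuting surjective group endomorphisms of K. Then θ₁ and θ₂ *-commute if and only if θ₁ restricts to an automorphism of the subgroup ker θ₂. -/
section

variable {G : Type*} [Group G] {f g : G →* G}

theorem MonoidHom.mapsTo_ker_of_comm (hcomm : ∀ k, f (g k) = g (f k)) :
    Set.MapsTo f (g.ker : Set G) (g.ker : Set G) := by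
  intro x hx
  simp_all [MonoidHom.mem_ker, ← hcomm]

theorem MonoidHom.eq_of_disjoint_ker (hdisj : Disjoint f.ker g.ker) {y y' : G}
    (hf : f y = f y') (hg : g y = g y') : y = y' :=
  mul_inv_eq_one.mp <| Subgroup.disjoint_def.mp hdisj
    (by simp [MonoidHom.mem_ker, hf]) (by simp [MonoidHom.mem_ker, hg])

theorem MonoidHom.injOn_ker_iff_disjoint_ker :
    Set.InjOn f (g.ker : Set G) ↔ Disjoint f.ker g.ker := by
  refine ⟨fun hinj => Subgroup.disjoint_def.mpr fun {y} hf hg => ?_,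
    fun hdisj y hy y' hy' hyy' => eq_of_disjoint_ker hdisj hyy' ?_⟩
  · exact hinj hg g.ker.one_mem (by simpa using hf)
  · rw [SetLike.mem_coe, MonoidHom.mem_ker] at hy hy'
    rw [hy, hy']

theorem StarCommute.disjoint_ker (h : StarCommute f g) : Disjoint f.ker g.ker := by
  refine Subgroup.disjoint_def.mpr fun {y} hf hg => ?_
  obtain ⟨_, _, huniq⟩ := h 1 1 (by simp)
  exact (huniq y ⟨hg, hf⟩).trans (huniq 1 ⟨map_one g, map_one f⟩).symm

theorem StarCommute.surjOn_ker (h : StarCommute f g) :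
    Set.SurjOn f (g.ker : Set G) (g.ker : Set G) := by
  intro c hc
  obtain ⟨y, ⟨hy, hfy⟩, -⟩ := h 1 c (by simpa [eq_comm] using hc)
  exact ⟨y, hy, hfy⟩

/-- Lifting `x₁` to some `z` along `g`, the defect `x₂⁻¹ * f z` lies in `ker g`; correcting `z`
by an `f`-preimage of it inside `ker g` gives the required `y`. -/
theorem starCommute_of_surjOn_ker (hsurj : Function.Surjective g)
    (hcomm : ∀ k, f (g k) = g (f k)) (hdisj : Disjoint f.ker g.ker)
    (hsurjOn : Set.SurjOn f (g.ker : Set G) (g.ker : Set G)) : StarCommute f g := by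
  intro x₁ x₂ hx
  obtain ⟨z, rfl⟩ := hsurj x₁
  have hdefect : x₂⁻¹ * f z ∈ g.ker := by
    simp [MonoidHom.mem_ker, ← hcomm, hx]
  obtain ⟨k, hk, hfk⟩ := hsurjOn hdefect
  rw [SetLike.mem_coe, MonoidHom.mem_ker] at hk
  refine ⟨z * k⁻¹, ⟨by simp [hk], by simp [hfk]⟩, fun y ⟨hgy, hfy⟩ => ?_⟩
  exact MonoidHom.eq_of_disjoint_ker hdisj (by simp [hfy, hfk]) (by simp [hgy, hk])

end

theorem stmt_4_general {K : Type*} [Group K] (θ₁ θ₂ : K →* K)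
    (hsurj₂ : Function.Surjective θ₂)
    (hcomm : ∀ k : K, θ₁ (θ₂ k) = θ₂ (θ₁ k)) :
    StarCommute θ₁ θ₂ ↔ Set.BijOn θ₁ (θ₂.ker : Set K) (θ₂.ker : Set K) := by
  refine ⟨fun h => ⟨MonoidHom.mapsTo_ker_of_comm hcomm,
    MonoidHom.injOn_ker_iff_disjoint_ker.mpr h.disjoint_ker, h.surjOn_ker⟩, fun h => ?_⟩
  exact starCommute_of_surjOn_ker hsurj₂ hcomm
    (MonoidHom.injOn_ker_iff_disjoint_ker.mp h.injOn) h.surjOn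

theorem stmt_4 {K : Type*} [Group K] (θ₁ θ₂ : K →* K)
    (hsurj₁ : Function.Surjective θ₁) (hsurj₂ : Function.Surjective θ₂)
    (hcomm : ∀ k : K, θ₁ (θ₂ k) = θ₂ (θ₁ k)) :
    StarCommute θ₁ θ₂ ↔ Set.BijOn θ₁ (θ₂.ker : Set K) (θ₂.ker : Set K) :=
  stmt_4_general θ₁ θ₂ hsurj₂ hcomm
end

section
/- Let K be a group and θ₁, θ₂ commuting surjective group endomorphisms of K with ker θ₁ ∩ ker θ₂ = {1}. If the restriction of θ₂ to ker θ₁ is surjective onto ker θ₁ (or the restriction of θ₁ to ker θ₂ is surjective onto ker θ₂), then θ₁ and θ₂ *-commute. -/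
theorem stmt_5 {K : Type*} [Group K] (θ₁ θ₂ : K →* K)
    (hsurj₁ : Function.Surjective θ₁) (hsurj₂ : Function.Surjective θ₂)
    (hcomm : ∀ k : K, θ₁ (θ₂ k) = θ₂ (θ₁ k))
    (hker : θ₁.ker ⊓ θ₂.ker = ⊥)
    (hrestr : Set.SurjOn θ₂ (θ₁.ker : Set K) (θ₁.ker : Set K) ∨
      Set.SurjOn θ₁ (θ₂.ker : Set K) (θ₂.ker : Set K)) :
    StarCommute θ₁ θ₂ := by
  intro x₁ x₂ h
  have uniq : ∀ y y' : K, θ₂ y = x₁ ∧ θ₁ y = x₂ → θ₂ y' = x₁ ∧ θ₁ y' = x₂ → y' = y := by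
    intro y y' ⟨h2, h1⟩ ⟨h2', h1'⟩
    have hm : y' * y⁻¹ ∈ θ₁.ker ⊓ θ₂.ker := by
      constructor <;> simp [MonoidHom.mem_ker, h1, h1', h2, h2']
    rw [hker, Subgroup.mem_bot] at hm
    have := mul_inv_eq_one.mp hm
    exact this
  rcases hrestr with hr | hr
  · -- θ₂ surjective on ker θ₁; pick z with θ₁ z = x₂
    obtain ⟨z, hz⟩ := hsurj₁ x₂
    have hd : (θ₂ z)⁻¹ * x₁ ∈ θ₁.ker := by
      simp [MonoidHom.mem_ker, hcomm, hz, h]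
    obtain ⟨c, hc, hcz⟩ := hr hd
    refine ⟨z * c, ⟨?_, ?_⟩, fun y hy => uniq _ _ ⟨?_, ?_⟩ hy⟩ <;>
      simp_all [MonoidHom.mem_ker]
  · obtain ⟨z, hz⟩ := hsurj₂ x₁
    have hd : (θ₁ z)⁻¹ * x₂ ∈ θ₂.ker := by
      simp [MonoidHom.mem_ker, ← hcomm, hz, ← h]
    obtain ⟨c, hc, hcz⟩ := hr hd
    refine ⟨z * c, ⟨?_, ?_⟩, fun y hy => uniq _ _ ⟨?_, ?_⟩ hy⟩ <;>
      simp_all [MonoidHom.mem_ker]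
end

section
/- Let K be a group and θ₁, θ₂ commuting surjective group endomorphisms of K with ker θ₁ ∩ ker θ₂ = {1}. If ker θ₂ is a co-Hopfian group, then θ₁ and θ₂ *-commute. -/
/-!
Write `N = ker θ₂`. Since the maps commute, `θ₁` restricts to an endomorphism of `N`, injective
because `ker θ₁ ∩ N = 1`, hence onto by co-Hopficity. Given `θ₁ x₁ = θ₂ x₂`, lift `x₁ = θ₂ z`;
then `θ₁ z · x₂⁻¹ ∈ N` equals `θ₁ m` for some `m ∈ N`, and `y = m⁻¹ z` works. Uniqueness holds
because two solutions agree modulo `ker θ₁ ∩ ker θ₂`.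
-/

namespace MonoidHom

variable {G : Type*} [Group G]

theorem eq_of_map_eq_of_inf_ker_eq_bot {H H' : Type*} [Group H] [Group H']
    {f : G →* H} {g : G →* H'} (hker : f.ker ⊓ g.ker = ⊥) {a b : G}
    (hf : f a = f b) (hg : g a = g b) : a = b := by
  have hmem : a * b⁻¹ ∈ f.ker ⊓ g.ker :=
    ⟨by simp [hf], by simp [hg]⟩
  rw [hker, Subgroup.mem_bot] at hmem
  exact mul_inv_eq_one.mp hmem

theorem map_mem_ker_of_commute {f g : G →* G} (hcomm : ∀ k, f (g k) = g (f k))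
    {x : G} (hx : x ∈ g.ker) : f x ∈ g.ker := by
  rw [mem_ker] at hx ⊢
  rw [← hcomm, hx, map_one]

def restrictKer (f g : G →* G) (hcomm : ∀ k, f (g k) = g (f k)) : g.ker →* g.ker :=
  (f.domRestrict g.ker).codRestrict g.ker fun x => map_mem_ker_of_commute hcomm x.2

theorem restrictKer_injective {f g : G →* G} (hcomm : ∀ k, f (g k) = g (f k))
    (hker : f.ker ⊓ g.ker = ⊥) : Function.Injective (restrictKer f g hcomm) := fun a b hab =>
  Subtype.ext <| eq_of_map_eq_of_inf_ker_eq_bot hker (congrArg Subtype.val hab)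
    (by rw [a.2, b.2])

theorem exists_map_eq_of_restrictKer_surjective {f g : G →* G}
    (hcomm : ∀ k, f (g k) = g (f k)) (hg : Function.Surjective g)
    (hsurj : Function.Surjective (restrictKer f g hcomm)) {x₁ x₂ : G} (h : f x₁ = g x₂) :
    ∃ y, g y = x₁ ∧ f y = x₂ := by
  obtain ⟨z, rfl⟩ := hg x₁
  have hk : f z * x₂⁻¹ ∈ g.ker := by
    rw [mem_ker, map_mul, map_inv, ← hcomm, h, mul_inv_cancel]
  obtain ⟨m, hm⟩ := hsurj ⟨f z * x₂⁻¹, hk⟩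
  have hm' : f m = f z * x₂⁻¹ := congrArg Subtype.val hm
  refine ⟨(m : G)⁻¹ * z, ?_, ?_⟩
  · rw [map_mul, map_inv, m.2, inv_one, one_mul]
  · rw [map_mul, map_inv, hm', mul_inv_rev, inv_inv, mul_assoc, inv_mul_cancel, mul_one]

end MonoidHom

theorem stmt_6_general {K : Type*} [Group K] (θ₁ θ₂ : K →* K)
    (hsurj₂ : Function.Surjective θ₂)
    (hcomm : ∀ k : K, θ₁ (θ₂ k) = θ₂ (θ₁ k))
    (hker : θ₁.ker ⊓ θ₂.ker = ⊥)
    (hcoHopf : ∀ φ : θ₂.ker →* θ₂.ker, Function.Injective φ → Function.Surjective φ) :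
    StarCommute θ₁ θ₂ := by
  intro x₁ x₂ h
  have hsurj := hcoHopf _ (MonoidHom.restrictKer_injective hcomm hker)
  obtain ⟨y, hy₂, hy₁⟩ :=
    MonoidHom.exists_map_eq_of_restrictKer_surjective hcomm hsurj₂ hsurj h
  refine ⟨y, ⟨hy₂, hy₁⟩, fun y' ⟨hy₂', hy₁'⟩ => ?_⟩
  exact MonoidHom.eq_of_map_eq_of_inf_ker_eq_bot hker (hy₁'.trans hy₁.symm) (hy₂'.trans hy₂.symm)

theorem stmt_6 {K : Type*} [Group K] (θ₁ θ₂ : K →* K)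
    (hsurj₁ : Function.Surjective θ₁) (hsurj₂ : Function.Surjective θ₂)
    (hcomm : ∀ k : K, θ₁ (θ₂ k) = θ₂ (θ₁ k))
    (hker : θ₁.ker ⊓ θ₂.ker = ⊥)
    (hcoHopf : ∀ φ : θ₂.ker →* θ₂.ker, Function.Injective φ → Function.Surjective φ) :
    StarCommute θ₁ θ₂ :=
  stmt_6_general θ₁ θ₂ hsurj₂ hcomm hker hcoHopf
end

section
/- Let X be a compact Hausdorff space, θ : X → X a regular surjective local homeomorphism with fiber cardinality N, α(f) = f ∘ θ, and L(f)(x) = N⁻¹ Σ_{y ∈ θ⁻¹(x)} f(y). Then there exists a finite open cover U₁, …, Uₙ of X such that θ restricted to each Uᵢ is injective, and for any partition of unity (vᵢ) subordinate to this cover, setting νᵢ = (N vᵢ)^{1/2}, one has Σᵢ νᵢ · α(L(νᵢ · f)) = f for all f ∈ C(X). -/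
open scoped BigOperators

theorem stmt_9 {X : Type*} [TopologicalSpace X] [CompactSpace X] [T2Space X]
    (θ : X → X) (hθ : IsLocalHomeomorph θ) (hsurj : Function.Surjective θ)
    (N : ℕ) (hN : 0 < N)
    (hfib : ∀ x : X, (θ ⁻¹' {x}).Finite)
    (hcard : ∀ x : X, (hfib x).toFinset.card = N)
    (L : (X → ℝ) → (X → ℝ))
    (hL : ∀ (f : X → ℝ) (x : X), L f x = (N : ℝ)⁻¹ * ∑ y ∈ (hfib x).toFinset, f y) :
    ∃ (n : ℕ) (U : Fin n → Set X),
      (∀ i, IsOpen (U i)) ∧ (⋃ i, U i) = Set.univ ∧ (∀ i, Set.InjOn θ (U i)) ∧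
      ∀ v : Fin n → X → ℝ,
        (∀ i, Continuous (v i)) → (∀ i x, 0 ≤ v i x) →
        (∀ x, ∑ i, v i x = 1) → (∀ i, closure {x | v i x ≠ 0} ⊆ U i) →
        ∀ f : X → ℝ, Continuous f → ∀ x : X,
          ∑ i, Real.sqrt ((N : ℝ) * v i x) *
            L (fun z => Real.sqrt ((N : ℝ) * v i z) * f z) (θ x) = f x := by
  choose e he hee using hθ
  obtain ⟨t, ht⟩ := IsCompact.elim_finite_subcover isCompact_univ
    (fun x => (e x).source) (fun x => (e x).open_source)
    (fun x _ => Set.mem_iUnion.mpr ⟨x, he x⟩)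
  classical
  let eqv : Fin t.card ≃ {x // x ∈ t} := t.equivFin.symm
  refine ⟨t.card, fun i => (e (eqv i)).source, fun i => (e _).open_source, ?_, ?_, ?_⟩
  · apply Set.eq_univ_of_univ_subset
    intro x hx
    have := ht (Set.mem_univ x)
    simp only [Set.mem_iUnion] at this
    obtain ⟨c, hc, hmem⟩ := this
    exact Set.mem_iUnion.mpr ⟨eqv.symm ⟨c, hc⟩, by simpa using hmem⟩
  · intro i
    have : θ = ⇑(e (eqv i)) := hee _
    rw [this]
    exact (e (eqv i)).injOn
  · intro v hvcont hvnn hvsum hvsupp f hf x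
    have hinj : ∀ i, Set.InjOn θ (e (eqv i)).source := by
      intro i
      have : θ = ⇑(e (eqv i)) := hee _
      rw [this]; exact (e (eqv i)).injOn
    set F := (hfib (θ x)).toFinset with hF
    have hxF : x ∈ F := by simp [hF]
    have key : ∀ y ∈ F, y ≠ x → ∀ i,
        Real.sqrt ((N : ℝ) * v i x) * Real.sqrt ((N : ℝ) * v i y) = 0 := by
      intro y hy hyx i
      by_cases hvx : v i x = 0
      · simp [hvx]
      by_cases hvy : v i y = 0
      · simp [hvy]
      · exfalso
        have hxU : x ∈ (e (eqv i)).source := hvsupp i (subset_closure hvx)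
        have hyU : y ∈ (e (eqv i)).source := hvsupp i (subset_closure hvy)
        have hθy : θ y = θ x := by
          have := hy; simp [hF, Set.Finite.mem_toFinset] at this; exact this
        exact hyx (hinj i hyU hxU hθy)
    simp only [hL]
    have step : ∀ i : Fin t.card,
        Real.sqrt ((N : ℝ) * v i x) *
          ((N : ℝ)⁻¹ * ∑ y ∈ F, Real.sqrt ((N : ℝ) * v i y) * f y)
        = (N : ℝ)⁻¹ * (((N : ℝ) * v i x) * f x) := by
      intro i
      have : ∑ y ∈ F, Real.sqrt ((N : ℝ) * v i x) * (Real.sqrt ((N : ℝ) * v i y) * f y)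
          = ((N : ℝ) * v i x) * f x := by
        rw [Finset.sum_eq_single x]
        · rw [← mul_assoc, Real.mul_self_sqrt (by have := hvnn i x; positivity)]
        · intro y hy hyx
          rw [← mul_assoc, key y hy hyx i, zero_mul]
        · exact fun h => absurd hxF h
        
      rw [mul_left_comm, Finset.mul_sum]
      simp only [this]
    rw [Finset.sum_congr rfl (fun i _ => step i), ← Finset.mul_sum]
    have : ∑ i : Fin t.card, ((N : ℝ) * v i x) * f x = (N : ℝ) * f x := by
      rw [← Finset.sum_mul]
      congr 1
      rw [← Finset.mul_sum, hvsum x, mul_one]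
    rw [this, ← mul_assoc, inv_mul_cancel₀ (by positivity), one_mul]
end

section
/- Let X be a compact Hausdorff space and θ₁, θ₂ : X → X commuting regular surjective local homeomorphisms with |θ₁⁻¹(x)| = N₁ for all x. Let α₂(f) = f ∘ θ₂ and L₁(f)(x) = N₁⁻¹ Σ_{y ∈ θ₁⁻¹(x)} f(y). Then θ₁ and θ₂ *-commute if and only if L₁ ∘ α₂ = α₂ ∘ L₁ on C(X). -/
open scoped BigOperators

theorem stmt_12 {X : Type*} [TopologicalSpace X] [CompactSpace X] [T2Space X]
    (θ₁ θ₂ : X → X) (hθ₁ : IsLocalHomeomorph θ₁) (hθ₂ : IsLocalHomeomorph θ₂)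
    (hsurj₁ : Function.Surjective θ₁) (hsurj₂ : Function.Surjective θ₂)
    (hcomm : θ₁ ∘ θ₂ = θ₂ ∘ θ₁)
    (N₁ N₂ : ℕ) (hN₁ : 0 < N₁) (hN₂ : 0 < N₂)
    (hfib₁ : ∀ x : X, (θ₁ ⁻¹' {x}).Finite) (hfib₂ : ∀ x : X, (θ₂ ⁻¹' {x}).Finite)
    (hcard₁ : ∀ x : X, (hfib₁ x).toFinset.card = N₁)
    (hcard₂ : ∀ x : X, (hfib₂ x).toFinset.card = N₂)
    (L₁ : (X → ℝ) → (X → ℝ))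
    (hL₁ : ∀ (f : X → ℝ) (x : X), L₁ f x = (N₁ : ℝ)⁻¹ * ∑ y ∈ (hfib₁ x).toFinset, f y) :
    StarCommute θ₁ θ₂ ↔
      ∀ f : X → ℝ, Continuous f → ∀ x : X, L₁ (f ∘ θ₂) x = L₁ f (θ₂ x) := by
  have hmaps : ∀ x : X, ∀ y ∈ (hfib₁ x).toFinset, θ₂ y ∈ (hfib₁ (θ₂ x)).toFinset := by
    intro x y hy
    simp only [Set.Finite.mem_toFinset, Set.mem_preimage, Set.mem_singleton_iff] at hy ⊢
    calc θ₁ (θ₂ y) = θ₂ (θ₁ y) := congrFun hcomm y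
    _ = θ₂ x := by rw [hy]
  constructor
  · intro hsc f hf x
    rw [hL₁, hL₁]
    congr 1
    refine Finset.sum_bij (fun y _ => θ₂ y) (hmaps x) ?_ ?_ (fun y _ => rfl)
    · intro a ha b hb hab
      simp only [Set.Finite.mem_toFinset, Set.mem_preimage, Set.mem_singleton_iff] at ha hb
      have h1 : θ₁ (θ₂ a) = θ₂ x := by
        calc θ₁ (θ₂ a) = θ₂ (θ₁ a) := congrFun hcomm a
        _ = θ₂ x := by rw [ha]
      obtain ⟨y, -, huniq⟩ := hsc (θ₂ a) x h1
      have ha' := huniq a ⟨rfl, ha⟩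
      have hb' := huniq b ⟨hab.symm, hb⟩
      rw [ha', hb']
    · intro z hz
      simp only [Set.Finite.mem_toFinset, Set.mem_preimage, Set.mem_singleton_iff] at hz
      obtain ⟨y, ⟨hy1, hy2⟩, -⟩ := hsc z x hz
      exact ⟨y, by simp only [Set.Finite.mem_toFinset, Set.mem_preimage,
        Set.mem_singleton_iff]; exact hy2, hy1⟩
  · intro h x₁ x₂ hx
    have hsurjOn : Set.SurjOn θ₂ ((hfib₁ x₂).toFinset : Set X)
        ((hfib₁ (θ₂ x₂)).toFinset : Set X) := by
      intro z hz
      by_contra hz'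
      have hSfin : (θ₂ '' ((hfib₁ x₂).toFinset : Set X)).Finite :=
        (Set.Finite.image θ₂ ((hfib₁ x₂).toFinset.finite_toSet))
      obtain ⟨f, hf0, hf1, hf01⟩ := exists_continuous_zero_one_of_isClosed
        hSfin.isClosed isClosed_singleton
        (by simpa [Set.disjoint_singleton_right] using hz')
      have hkey := h f f.continuous x₂
      rw [hL₁, hL₁] at hkey
      have hne : ((N₁ : ℝ)⁻¹ : ℝ) ≠ 0 := by
        positivity
      have hsums := mul_left_cancel₀ hne hkey
      have hLzero : ∑ y ∈ (hfib₁ x₂).toFinset, (⇑f ∘ θ₂) y = 0 := by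
        refine Finset.sum_eq_zero fun y hy => ?_
        exact hf0 (Set.mem_image_of_mem θ₂ (by exact_mod_cast hy))
      have hRpos : (1 : ℝ) ≤ ∑ y ∈ (hfib₁ (θ₂ x₂)).toFinset, f y := by
        have hz'' : z ∈ (hfib₁ (θ₂ x₂)).toFinset := by exact_mod_cast hz
        have h1 := Finset.single_le_sum (f := fun y => f y)
          (fun i _ => (hf01 i).1) hz''
        have hfz : f z = 1 := by simpa using hf1 rfl
        simpa [hfz] using h1
      rw [hLzero] at hsums
      linarith [hsums, hRpos]
    classical
    have hinjOn : Set.InjOn θ₂ ((hfib₁ x₂).toFinset : Set X) := by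
      have himg : (hfib₁ x₂).toFinset.image θ₂ = (hfib₁ (θ₂ x₂)).toFinset := by
        apply Finset.Subset.antisymm
        · exact Finset.image_subset_iff.mpr (hmaps x₂)
        · intro b hb
          obtain ⟨a, ha, hab⟩ := hsurjOn (by exact_mod_cast hb)
          exact Finset.mem_image.mpr ⟨a, by exact_mod_cast ha, hab⟩
      apply Finset.injOn_of_card_image_eq
      rw [himg, hcard₁, hcard₁]
    have hx₁ : x₁ ∈ ((hfib₁ (θ₂ x₂)).toFinset : Set X) := by
      simp only [Finset.coe_sort_coe, Set.Finite.coe_toFinset, Set.mem_preimage,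
        Set.mem_singleton_iff]
      exact hx
    obtain ⟨y, hyF, hyz⟩ := hsurjOn hx₁
    have hyfib : θ₁ y = x₂ := by
      simpa [Set.Finite.coe_toFinset] using hyF
    refine ⟨y, ⟨hyz, hyfib⟩, ?_⟩
    intro y' ⟨hy'1, hy'2⟩
    apply hinjOn
    · simp [Set.Finite.coe_toFinset, hy'2]
    · exact hyF
    · rw [hy'1, hyz]
end
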